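/- arXiv:2302.09497 — 3 statements merged into one kernel-verified Lean document; each statement's English description precedes it below -/
import Mathlib

section
/- The normalized monomials ((p+1) C(p,j))^{1/2} z₀^{p-j} z₁^{j} concentrate away from the region |z₀| ≤ 1/2: the supremum of ((p+1) C(p,j))^{1/2} |z₀|^{p-j} |z₁|^{j} over p/3 ≤ j ≤ 2p/3 and (z₀,z₁) ∈ S³ with |z₀| ≤ 1/2 tends to 0 as p → ∞. -/
/-!
Squared, the quantity is `(p + 1) C(p,j) u^(p-j) (1-u)^j` with `u = |z₀|² ≤ 1/4`. Since
`j ≤ 2(p - j)`, the factor `u^(p-j) (1-u)^j` is largest at `u = 1/4`, and `C(p,j) (1/3)^(p-j) (2/3)^j`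
is a single term of `(1/3 + 2/3)^p = 1`. Together they bound `C(p,j) u^(p-j) (1-u)^j` by
`(3/4)^(p-j) (9/8)^j ≤ (243/256)^(p-j)`, which decays geometrically in `p` because `p - j ≥ p/3`,
and so beats the factor `p + 1`.
-/

open Filter Topology

theorem choose_mul_pow_mul_pow_le_add_pow {R : Type*} [CommSemiring R] [PartialOrder R]
    [IsOrderedRing R] {a b : R} (ha : 0 ≤ a) (hb : 0 ≤ b) {p j : ℕ} (hj : j ≤ p) :
    a ^ j * b ^ (p - j) * p.choose j ≤ (a + b) ^ p := by
  rw [add_pow]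
  exact Finset.single_le_sum (f := fun k ↦ a ^ k * b ^ (p - k) * p.choose k)
    (fun _ _ ↦ by positivity) (Finset.mem_range.2 (Nat.lt_succ_of_le hj))

theorem mul_one_sub_sq_le {u v : ℝ} (huv : u ≤ v) (hv : v ≤ 1 / 3) :
    u * (1 - u) ^ 2 ≤ v * (1 - v) ^ 2 := by
  have hg : 0 ≤ (1 - u - v) ^ 2 - u * v := by nlinarith
  nlinarith [mul_nonneg (sub_nonneg.2 huv) hg]

theorem pow_mul_one_sub_pow_le {u v : ℝ} (hu : 0 ≤ u) (huv : u ≤ v) (hv : v ≤ 1 / 3)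
    {n m : ℕ} (hmn : m ≤ 2 * n) :
    u ^ n * (1 - u) ^ m ≤ v ^ n * (1 - v) ^ m := by
  -- Squaring gives `(u (1-u)^2)^m u^(2n-m)`, a product of functions increasing on `[0, 1/3]`.
  obtain ⟨k, hk⟩ := Nat.exists_eq_add_of_le hmn
  have hsq (w : ℝ) : (w ^ n * (1 - w) ^ m) ^ 2 = (w * (1 - w) ^ 2) ^ m * w ^ k := by
    rw [mul_pow, mul_pow, ← pow_mul, ← pow_mul, ← pow_mul, mul_comm n, hk, pow_add]; ring
  have hv₀ : 0 ≤ v := hu.trans huv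
  have hu₁ : 0 ≤ 1 - u := by linarith
  have hv₁ : 0 ≤ 1 - v := by linarith
  refine (pow_le_pow_iff_left₀ (by positivity) (by positivity) two_ne_zero).1 ?_
  rw [hsq, hsq]
  gcongr ?_ ^ m * ?_ ^ k
  exact mul_one_sub_sq_le huv hv

theorem choose_mul_pow_mul_one_sub_pow_le {u : ℝ} (hu : 0 ≤ u) (hu' : u ≤ 1 / 4) {p j : ℕ}
    (hjp : 3 * j ≤ 2 * p) :
    p.choose j * u ^ (p - j) * (1 - u) ^ j ≤ (63 / 64) ^ p := by
  have hbinom : (2 / 3 : ℝ) ^ j * (1 / 3) ^ (p - j) * p.choose j ≤ 1 := by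
    refine (choose_mul_pow_mul_pow_le_add_pow (by norm_num) (by norm_num) ?_).trans_eq ?_
    · omega
    · norm_num
  have hmono : u ^ (p - j) * (1 - u) ^ j ≤ (1 / 4) ^ (p - j) * (3 / 4) ^ j := by
    convert pow_mul_one_sub_pow_le hu hu' (by norm_num) (show j ≤ 2 * (p - j) by omega) using 3
    norm_num
  have h₁ : (1 / 4 : ℝ) ^ (p - j) = (1 / 3) ^ (p - j) * (3 / 4) ^ (p - j) := by
    rw [← mul_pow]; norm_num
  have h₂ : (3 / 4 : ℝ) ^ j = (2 / 3) ^ j * (9 / 8) ^ j := by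
    rw [← mul_pow]; norm_num
  calc (p.choose j : ℝ) * u ^ (p - j) * (1 - u) ^ j
      ≤ p.choose j * ((1 / 4) ^ (p - j) * (3 / 4) ^ j) := by
        rw [mul_assoc]
        exact mul_le_mul_of_nonneg_left hmono (Nat.cast_nonneg _)
    _ = ((2 / 3) ^ j * (1 / 3) ^ (p - j) * p.choose j) * ((3 / 4) ^ (p - j) * (9 / 8) ^ j) := by
        rw [h₁, h₂]; ring
    _ ≤ 1 * ((3 / 4) ^ (p - j) * (9 / 8) ^ (2 * (p - j))) := by
        gcongr
        · norm_num
        · omega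
    _ = (243 / 256) ^ (p - j) := by rw [pow_mul, ← mul_pow]; norm_num
    _ ≤ ((63 / 64) ^ 3) ^ (p - j) := by gcongr; norm_num
    _ ≤ (63 / 64) ^ p := by
        rw [← pow_mul]
        exact pow_le_pow_of_le_one (by norm_num) (by norm_num) (by omega)

theorem sqrt_mul_pow_mul_pow_le {x y : ℝ} (hx : 0 ≤ x) (hy : 0 ≤ y) (hxy : x ^ 2 + y ^ 2 = 1)
    (hx' : x ≤ 1 / 2) {p j : ℕ} (hjp : 3 * j ≤ 2 * p) :
    √((p + 1) * p.choose j) * x ^ (p - j) * y ^ j ≤ √((p + 1) * (63 / 64) ^ p) := by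
  rw [Real.le_sqrt (by positivity) (by positivity)]
  have hy2 : y ^ 2 = 1 - x ^ 2 := by linarith
  calc (√((p + 1) * p.choose j) * x ^ (p - j) * y ^ j) ^ 2
      = ((p : ℝ) + 1) * (p.choose j * (x ^ 2) ^ (p - j) * (1 - x ^ 2) ^ j) := by
        rw [mul_pow, mul_pow, Real.sq_sqrt (by positivity), ← hy2, ← pow_mul, ← pow_mul,
          ← pow_mul, ← pow_mul]
        ring
    _ ≤ ((p : ℝ) + 1) * (63 / 64) ^ p := by
        gcongr
        exact choose_mul_pow_mul_one_sub_pow_le (sq_nonneg x) (by nlinarith) hjp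

/-- The normalized monomials `((p+1) C(p,j))^{1/2} z₀^{p-j} z₁^{j}` concentrate away
from `{|z₀| ≤ 1/2}` on `S³`: the supremum over `p/3 ≤ j ≤ 2p/3` and points of `S³`
with `|z₀| ≤ 1/2` tends to `0` as `p → ∞`. -/
theorem stmt_5 :
    ∀ ε > (0 : ℝ), ∃ P : ℕ, ∀ p ≥ P, ∀ j : ℕ,
      (p : ℝ) / 3 ≤ (j : ℝ) → (j : ℝ) ≤ 2 * (p : ℝ) / 3 →
      ∀ z₀ z₁ : ℂ, ‖z₀‖ ^ 2 + ‖z₁‖ ^ 2 = 1 → ‖z₀‖ ≤ 1 / 2 →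
        Real.sqrt (((p : ℝ) + 1) * (Nat.choose p j : ℝ)) * ‖z₀‖ ^ (p - j) * ‖z₁‖ ^ j ≤ ε := by
  intro ε hε
  have hdecay : Tendsto (fun p : ℕ ↦ √((p + 1) * (63 / 64 : ℝ) ^ p)) atTop (𝓝 0) := by
    have h := (tendsto_self_mul_const_pow_of_lt_one (r := 63 / 64) (by norm_num)
      (by norm_num)).add (tendsto_pow_atTop_nhds_zero_of_lt_one (r := (63 / 64 : ℝ))
      (by norm_num) (by norm_num))
    simpa [add_mul] using h.sqrt
  obtain ⟨P, hP⟩ := eventually_atTop.1 (hdecay.eventually (ge_mem_nhds hε))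
  refine ⟨P, fun p hp j _ hj z₀ z₁ hz hz₀ ↦ ?_⟩
  have hjp : 3 * j ≤ 2 * p := by exact_mod_cast (by linarith : (3 * j : ℝ) ≤ 2 * p)
  exact (sqrt_mul_pow_mul_pow_le (norm_nonneg _) (norm_nonneg _) hz hz₀ hjp).trans (hP p hp)
end

section
/- Let θ be an irrational real number. The two matrices c₁ = diag rotation by angle θπ about the z-axis and c₂ = rotation by angle θπ about the x-axis generate a dense subgroup of SO(3). -/
/-!
Euler angles write every rotation as `rotZ α * rotX β * rotZ γ`. Since `θπ / 2π` is
irrational, `θπ` and the period `2π` generate a dense subgroup of `ℝ`; by continuity, the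
closure of the monoid generated by `c₁ = rotZ (θπ)` and `c₁ᵀ = rotZ (-θπ)` contains every
`rotZ t`, and likewise for `rotX`. The closure of a submonoid is a submonoid, so it contains
all three Euler factors.
-/

open Real Matrix

noncomputable def rotZ (a : ℝ) : Matrix (Fin 3) (Fin 3) ℝ :=
  !![cos a, -sin a, 0; sin a, cos a, 0; 0, 0, 1]

noncomputable def rotX (a : ℝ) : Matrix (Fin 3) (Fin 3) ℝ :=
  !![1, 0, 0; 0, cos a, -sin a; 0, sin a, cos a]

lemma exists_sqrt_mul_cos_sin_eq (x y : ℝ) :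
    ∃ γ, √(x ^ 2 + y ^ 2) * cos γ = x ∧ √(x ^ 2 + y ^ 2) * sin γ = y := by
  have h : √(x ^ 2 + y ^ 2) = ‖(⟨x, y⟩ : ℂ)‖ := by
    rw [Complex.norm_def, Complex.normSq_mk, sq, sq]
  exact ⟨Complex.arg ⟨x, y⟩, by rw [h, Complex.norm_mul_cos_arg],
    by rw [h, Complex.norm_mul_sin_arg]⟩

lemma rotZ_add (a b : ℝ) : rotZ (a + b) = rotZ a * rotZ b := by
  simp [rotZ, cos_add, sin_add]; constructor <;> ring

lemma rotX_add (a b : ℝ) : rotX (a + b) = rotX a * rotX b := by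
  simp [rotX, cos_add, sin_add]; constructor <;> ring

lemma rotZ_zero : rotZ 0 = 1 := by simp [rotZ, one_fin_three]

lemma rotX_zero : rotX 0 = 1 := by simp [rotX, one_fin_three]

lemma rotZ_two_pi : rotZ (2 * π) = 1 := by simp [rotZ, one_fin_three]

lemma rotX_two_pi : rotX (2 * π) = 1 := by simp [rotX, one_fin_three]

lemma rotZ_neg (a : ℝ) : rotZ (-a) = (rotZ a)ᵀ := by
  ext i j; fin_cases i <;> fin_cases j <;> simp [rotZ]

lemma rotX_neg (a : ℝ) : rotX (-a) = (rotX a)ᵀ := by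
  ext i j; fin_cases i <;> fin_cases j <;> simp [rotX]

lemma continuous_rotZ : Continuous rotZ := by
  refine continuous_matrix fun i j => ?_
  fin_cases i <;> fin_cases j <;> simp [rotZ] <;> fun_prop

lemma continuous_rotX : Continuous rotX := by
  refine continuous_matrix fun i j => ?_
  fin_cases i <;> fin_cases j <;> simp [rotX] <;> fun_prop

lemma rotZ_mem_specialOrthogonalGroup (a : ℝ) :
    rotZ a ∈ specialOrthogonalGroup (Fin 3) ℝ := by
  refine mem_specialOrthogonalGroup_iff.2 ⟨(mem_orthogonalGroup_iff' _ _).2 ?_, ?_⟩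
  · rw [← rotZ_neg, ← rotZ_add, neg_add_cancel, rotZ_zero]
  · simp [rotZ, det_fin_three, ← sq]

lemma rotX_mem_specialOrthogonalGroup (a : ℝ) :
    rotX a ∈ specialOrthogonalGroup (Fin 3) ℝ := by
  refine mem_specialOrthogonalGroup_iff.2 ⟨(mem_orthogonalGroup_iff' _ _).2 ?_, ?_⟩
  · rw [← rotX_neg, ← rotX_add, neg_add_cancel, rotX_zero]
  · simp [rotX, det_fin_three, ← sq]

lemma exists_rotZ_mul_rotX_mulVec_single_two {v : Fin 3 → ℝ} (hv : v ⬝ᵥ v = 1) :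
    ∃ α β, (rotZ α * rotX β) *ᵥ Pi.single 2 1 = v := by
  simp only [dotProduct, Fin.sum_univ_three] at hv
  obtain ⟨α, hcos, hsin⟩ := exists_sqrt_mul_cos_sin_eq (-v 1) (v 0)
  rw [neg_sq] at hcos hsin
  have hsinβ : sin (arccos (v 2)) = √(v 1 ^ 2 + v 0 ^ 2) := by
    rw [sin_arccos]; congr 1; linear_combination -hv
  have hcosβ : cos (arccos (v 2)) = v 2 := cos_arccos (by nlinarith) (by nlinarith)
  refine ⟨α, arccos (v 2), ?_⟩
  ext i
  fin_cases i <;> simp [rotZ, rotX, mulVec, dotProduct, Fin.sum_univ_three, hsinβ, hcosβ]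
  · rw [mul_comm, hsin]
  · rw [mul_comm, hcos, neg_neg]

lemma eq_rotZ_of_mulVec_single_two {B : Matrix (Fin 3) (Fin 3) ℝ}
    (hB : B ∈ specialOrthogonalGroup (Fin 3) ℝ) (hfix : B *ᵥ Pi.single 2 1 = Pi.single 2 1) :
    ∃ γ, B = rotZ γ := by
  obtain ⟨hO, hdet⟩ := mem_specialOrthogonalGroup_iff.1 hB
  have hBtB := (mem_orthogonalGroup_iff' _ _).1 hO
  have hrow : Bᵀ *ᵥ Pi.single 2 1 = Pi.single 2 1 := by
    rw [← hfix, mulVec_mulVec, hBtB, one_mulVec, hfix]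
  obtain ⟨h02, h12, h22⟩ : B 0 2 = 0 ∧ B 1 2 = 0 ∧ B 2 2 = 1 := by
    simpa [Fin.forall_fin_succ] using congrFun hfix
  obtain ⟨h20, h21, -⟩ : B 2 0 = 0 ∧ B 2 1 = 0 ∧ B 2 2 = 1 := by
    simpa [Fin.forall_fin_succ] using congrFun hrow
  have hnorm : B 0 0 ^ 2 + B 1 0 ^ 2 = 1 := by
    simpa [mul_apply, Fin.sum_univ_succ, h20, sq] using congrFun (congrFun hBtB 0) 0
  have horth : B 0 0 * B 0 1 + B 1 0 * B 1 1 = 0 := by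
    simpa [mul_apply, Fin.sum_univ_succ, h20] using congrFun (congrFun hBtB 0) 1
  have hdet2 : B 0 0 * B 1 1 - B 0 1 * B 1 0 = 1 := by
    simpa [det_fin_three, h02, h12, h20, h21, h22] using hdet
  obtain ⟨γ, hcos, hsin⟩ := exists_sqrt_mul_cos_sin_eq (B 0 0) (B 1 0)
  rw [hnorm, sqrt_one, one_mul] at hcos hsin
  refine ⟨γ, ?_⟩
  ext i j
  fin_cases i <;> fin_cases j <;> simp [rotZ, hcos, hsin, h02, h12, h20, h21, h22]
  · linear_combination (-(B 0 1)) * hnorm + B 0 0 * horth - B 1 0 * hdet2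
  · linear_combination (-(B 1 1)) * hnorm + B 1 0 * horth + B 0 0 * hdet2

theorem exists_eq_rotZ_mul_rotX_mul_rotZ {A : Matrix (Fin 3) (Fin 3) ℝ}
    (hA : A ∈ specialOrthogonalGroup (Fin 3) ℝ) :
    ∃ α β γ, A = rotZ α * rotX β * rotZ γ := by
  have hunit : (A *ᵥ Pi.single 2 1) ⬝ᵥ (A *ᵥ Pi.single 2 1) = 1 := by
    rw [dotProduct_mulVec, ← mulVec_transpose, mulVec_mulVec,
      (mem_orthogonalGroup_iff' _ _).1 (mem_specialOrthogonalGroup_iff.1 hA).1, one_mulVec]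
    simp
  obtain ⟨α, β, hαβ⟩ := exists_rotZ_mul_rotX_mulVec_single_two hunit
  have hinv : rotX (-β) * rotZ (-α) * (rotZ α * rotX β) = 1 := by
    rw [mul_assoc, ← mul_assoc (rotZ _), ← rotZ_add, neg_add_cancel, rotZ_zero, one_mul,
      ← rotX_add, neg_add_cancel, rotX_zero]
  obtain ⟨γ, hγ⟩ := eq_rotZ_of_mulVec_single_two (B := rotX (-β) * rotZ (-α) * A)
    (mul_mem (mul_mem (rotX_mem_specialOrthogonalGroup _)
      (rotZ_mem_specialOrthogonalGroup _)) hA)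
    (by rw [← mulVec_mulVec, ← hαβ, mulVec_mulVec, hinv, one_mulVec])
  refine ⟨α, β, γ, ?_⟩
  rw [← hγ, ← mul_assoc, mul_eq_one_comm.1 hinv, one_mul]

theorem Continuous.mem_closure_submonoid_of_irrational_div {M : Type*} [Monoid M]
    [TopologicalSpace M] {S : Submonoid M} {f : ℝ → M} (hf : Continuous f)
    (hadd : ∀ s t, f (s + t) = f s * f t) {a b : ℝ} (hab : Irrational (a / b)) (hb : f b = 1)
    (ha : f a ∈ S) (ha' : f (-a) ∈ S) (t : ℝ) : f t ∈ closure (S : Set M) := by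
  have h0 : f 0 = 1 := by simpa [hb] using (hadd 0 b).symm
  have hb' : f (-b) = 1 := by simpa [hb, h0] using (hadd (-b) b).symm
  let T : AddSubmonoid ℝ :=
    { carrier := f ⁻¹' S
      add_mem' := fun {s t} hs ht => show f (s + t) ∈ S by rw [hadd]; exact mul_mem hs ht
      zero_mem' := by simp [h0, one_mem] }
  have hG : (AddSubgroup.closure {a, b}).toAddSubmonoid ≤ T := by
    rw [AddSubgroup.closure_toAddSubmonoid, AddSubmonoid.closure_le]
    simp only [Set.neg_insert, Set.neg_singleton, Set.union_subset_iff, Set.insert_subset_iff,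
      Set.singleton_subset_iff]
    exact ⟨⟨ha, show f b ∈ S from hb ▸ one_mem S⟩, ha',
      show f (-b) ∈ S from hb' ▸ one_mem S⟩
  have hdense := (dense_addSubgroupClosure_pair_iff.2 hab).mono hG
  exact hf.closure_preimage_subset _ (hdense.closure_eq ▸ Set.mem_univ t)

/-- For irrational `θ`, the rotations `c₁` (about the z-axis) and `c₂` (about the
x-axis) by angle `θπ` generate a dense subgroup of `SO(3)`: every special orthogonal
`3×3` matrix lies in the closure of the subgroup (= submonoid generated by the two
rotations and their inverses, i.e. transposes). -/
theorem stmt_6 (θ : ℝ) (hθ : Irrational θ) :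
    ∀ A : Matrix (Fin 3) (Fin 3) ℝ, A.transpose * A = 1 → A.det = 1 →
      A ∈ closure
        (↑(Submonoid.closure
            ({!![Real.cos (θ * Real.pi), -Real.sin (θ * Real.pi), 0;
                 Real.sin (θ * Real.pi), Real.cos (θ * Real.pi), 0;
                 0, 0, 1],
              !![1, 0, 0;
                 0, Real.cos (θ * Real.pi), -Real.sin (θ * Real.pi);
                 0, Real.sin (θ * Real.pi), Real.cos (θ * Real.pi)],
              (!![Real.cos (θ * Real.pi), -Real.sin (θ * Real.pi), 0;
                 Real.sin (θ * Real.pi), Real.cos (θ * Real.pi), 0;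
                 0, 0, 1] : Matrix (Fin 3) (Fin 3) ℝ).transpose,
              (!![1, 0, 0;
                 0, Real.cos (θ * Real.pi), -Real.sin (θ * Real.pi);
                 0, Real.sin (θ * Real.pi), Real.cos (θ * Real.pi)] : Matrix (Fin 3) (Fin 3) ℝ).transpose}
              : Set (Matrix (Fin 3) (Fin 3) ℝ))) : Set (Matrix (Fin 3) (Fin 3) ℝ)) := by
  intro A hA hdet
  obtain ⟨α, β, γ, rfl⟩ :=
    exists_eq_rotZ_mul_rotX_mul_rotZ ⟨(mem_orthogonalGroup_iff' _ _).2 hA, hdet⟩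
  set S : Submonoid (Matrix (Fin 3) (Fin 3) ℝ) :=
    Submonoid.closure {rotZ (θ * π), rotX (θ * π), (rotZ (θ * π))ᵀ, (rotX (θ * π))ᵀ}
  have hirr : Irrational (θ * π / (2 * π)) := by
    rw [mul_div_mul_right _ _ pi_ne_zero]
    exact_mod_cast hθ.div_natCast two_ne_zero
  have hZ (t : ℝ) : rotZ t ∈ S.topologicalClosure :=
    continuous_rotZ.mem_closure_submonoid_of_irrational_div rotZ_add hirr rotZ_two_pi
      (Submonoid.subset_closure (by simp)) (rotZ_neg _ ▸ Submonoid.subset_closure (by simp)) t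
  have hX (t : ℝ) : rotX t ∈ S.topologicalClosure :=
    continuous_rotX.mem_closure_submonoid_of_irrational_div rotX_add hirr rotX_two_pi
      (Submonoid.subset_closure (by simp)) (rotX_neg _ ▸ Submonoid.subset_closure (by simp)) t
  exact (mul_mem (mul_mem (hZ α) (hX β)) (hZ γ) : _ ∈ S.topologicalClosure)
end

section
/- Von Neumann mean ergodic theorem with identification of the limit: let (U_t) be a strongly continuous one-parameter unitary group on a Hilbert space H. Then for each v ∈ H, the time averages (1/T)∫₀^T U_t v dt converge in norm as T → ∞ to the orthogonal projection of v onto the space of (U_t)-invariant vectors; moreover the limits as T → +∞ and T → −∞ agree. -/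
/-!
Let `P` be the orthogonal projection onto the invariant vectors. The averages fix `Pv`, so it
suffices that they tend to `0` on `v - Pv`. The average of a coboundary `U s x - x` telescopes to
`T⁻¹ • (∫_T^{T+s} - ∫_0^s) U t x`, which is `O(1/|T|)`. Since all averages are contractions, the
vectors whose averages tend to `0` form a closed subspace `K`, and `K` contains every coboundary.
A vector `w ⊥ K` satisfies `⟪U s w, w⟫ = ‖w‖²` with `‖U s w‖ ≤ ‖w‖`, hence is invariant; so
`Kᗮ` consists of invariant vectors and `v - Pv` lies in `Kᗮᗮ = K`.
-/

open scoped ComplexInnerProductSpace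

open Filter MeasureTheory Topology

section Invariant

variable {ι 𝕜 E : Type*} [RCLike 𝕜] [NormedAddCommGroup E]

section NormedSpace

variable [NormedSpace 𝕜 E] (U : ι → E →L[𝕜] E)

def invariantSubmodule : Submodule 𝕜 E where
  carrier := {w | ∀ i, U i w = w}
  add_mem' ha hb i := by rw [map_add, ha i, hb i]
  zero_mem' i := map_zero _
  smul_mem' c x hx i := by rw [map_smul, hx i]

variable {U} in
theorem mem_invariantSubmodule {w : E} : w ∈ invariantSubmodule U ↔ ∀ i, U i w = w := Iff.rfl

theorem isClosed_invariantSubmodule : IsClosed (invariantSubmodule U : Set E) := by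
  simp only [invariantSubmodule, Submodule.coe_set_mk, AddSubmonoid.coe_set_mk,
    AddSubsemigroup.coe_set_mk, Set.ofPred_forall]
  exact isClosed_iInter fun i => isClosed_eq (U i).continuous continuous_id

end NormedSpace

variable [InnerProductSpace 𝕜 E] {U : ι → E →L[𝕜] E}

instance [CompleteSpace E] : (invariantSubmodule U).HasOrthogonalProjection :=
  have : CompleteSpace (invariantSubmodule U) := (isClosed_invariantSubmodule U).completeSpace_coe
  .ofCompleteSpace _

theorem orthogonal_invariantSubmodule_le [CompleteSpace E] (hU : ∀ i x, ‖U i x‖ ≤ ‖x‖)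
    {K : Submodule 𝕜 E} (hK : IsClosed (K : Set E)) (hsub : ∀ i x, U i x - x ∈ K) :
    (invariantSubmodule U)ᗮ ≤ K := by
  suffices Kᗮ ≤ invariantSubmodule U by
    simpa [Submodule.orthogonal_orthogonal_eq_closure, hK.submodule_topologicalClosure_eq]
      using Submodule.orthogonal_le this
  intro w hw i
  have hinner : inner 𝕜 (U i w) w = inner 𝕜 w w := by
    rw [← sub_eq_zero, ← inner_sub_left]
    exact Submodule.inner_right_of_mem_orthogonal (hsub i w) hw
  refine eq_of_norm_le_re_inner_eq_norm_sq (𝕜 := 𝕜) (hU i w) ?_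
  rw [hinner, inner_self_eq_norm_sq]

end Invariant

section TendstoZero

variable {ι R E F : Type*}

def tendstoZeroSubmodule [Semiring R] [AddCommMonoid E] [Module R E] [TopologicalSpace F]
    [AddCommMonoid F] [Module R F] [ContinuousAdd F] [ContinuousConstSMul R F]
    (A : ι → E →ₗ[R] F) (l : Filter ι) : Submodule R E where
  carrier := {y | Tendsto (A · y) l (𝓝 0)}
  add_mem' {y z} hy hz := by
    simpa only [Set.mem_ofPred_eq, map_add, add_zero] using hy.add hz
  zero_mem' := by simpa only [Set.mem_ofPred_eq, map_zero] using tendsto_const_nhds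
  smul_mem' c y hy := by
    simpa only [Set.mem_ofPred_eq, map_smul, smul_zero] using hy.const_smul c

theorem isClosed_tendstoZeroSubmodule [Semiring R] [SeminormedAddCommGroup E] [Module R E]
    [SeminormedAddCommGroup F] [Module R F] [ContinuousConstSMul R F] {A : ι → E →ₗ[R] F}
    {K : NNReal} (hA : ∀ i, LipschitzWith K (A i)) (l : Filter ι) :
    IsClosed (tendstoZeroSubmodule A l : Set E) :=
  (LipschitzWith.uniformEquicontinuous _ K hA).equicontinuous.isClosed_setOfPred_tendsto
    continuous_const

end TendstoZero

section TimeAverage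

variable {E : Type*} [NormedAddCommGroup E] [NormedSpace ℂ E] (U : ℝ → E →L[ℂ] E)
  (hcont : ∀ v, Continuous fun t => U t v)

noncomputable def timeAverage (T : ℝ) : E →ₗ[ℂ] E where
  toFun v := T⁻¹ • ∫ t in 0..T, U t v
  map_add' x y := by
    simp only [map_add]
    rw [intervalIntegral.integral_add ((hcont x).intervalIntegrable _ _)
      ((hcont y).intervalIntegrable _ _), smul_add]
  map_smul' c x := by
    simp only [map_smul, intervalIntegral.integral_smul, RingHom.id_apply]
    rw [smul_comm]

variable {U hcont}

theorem timeAverage_apply (T : ℝ) (v : E) :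
    timeAverage U hcont T v = T⁻¹ • ∫ t in 0..T, U t v := rfl

theorem norm_integral_le_of_contraction (hU : ∀ t x, ‖U t x‖ ≤ ‖x‖) (a b : ℝ) (x : E) :
    ‖∫ t in a..b, U t x‖ ≤ |b - a| * ‖x‖ := by
  rw [mul_comm]
  exact intervalIntegral.norm_integral_le_of_norm_le_const fun t _ => hU t x

theorem norm_timeAverage_le (hU : ∀ t x, ‖U t x‖ ≤ ‖x‖) (T : ℝ) (v : E) :
    ‖timeAverage U hcont T v‖ ≤ ‖v‖ := by
  rcases eq_or_ne T 0 with rfl | hT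
  · simp [timeAverage_apply]
  calc ‖timeAverage U hcont T v‖ = |T|⁻¹ * ‖∫ t in 0..T, U t v‖ := by
        rw [timeAverage_apply, norm_smul, Real.norm_eq_abs, abs_inv]
    _ ≤ |T|⁻¹ * (|T| * ‖v‖) := by
        gcongr; simpa using norm_integral_le_of_contraction hU 0 T v
    _ = ‖v‖ := by field_simp

theorem lipschitzWith_timeAverage (hU : ∀ t x, ‖U t x‖ ≤ ‖x‖) (T : ℝ) :
    LipschitzWith 1 (timeAverage U hcont T) := by
  simpa using AddMonoidHomClass.lipschitz_of_bound (timeAverage U hcont T) 1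
    fun v => by simpa using norm_timeAverage_le hU T v

theorem timeAverage_of_mem_invariantSubmodule [CompleteSpace E] {w : E}
    (hw : w ∈ invariantSubmodule U) {T : ℝ} (hT : T ≠ 0) : timeAverage U hcont T w = w := by
  simp only [timeAverage_apply, mem_invariantSubmodule.1 hw, intervalIntegral.integral_const,
    sub_zero, smul_smul, inv_mul_cancel₀ hT, one_smul]

theorem norm_timeAverage_sub_le (hgrp : ∀ s t, U (s + t) = (U s).comp (U t))
    (hU : ∀ t x, ‖U t x‖ ≤ ‖x‖) (T s : ℝ) (x : E) :
    ‖timeAverage U hcont T (U s x - x)‖ ≤ |T|⁻¹ * (2 * |s| * ‖x‖) := by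
  have hint (a b : ℝ) : IntervalIntegrable (fun t => U t x) volume a b :=
    (hcont x).intervalIntegrable a b
  have hshift : ∫ t in 0..T, U t (U s x) = ∫ t in s..T + s, U t x := by
    simp_rw [← ContinuousLinearMap.comp_apply, ← hgrp]
    rw [intervalIntegral.integral_comp_add_right (fun t => U t x) s, zero_add]
  have htele : ∫ t in 0..T, U t (U s x - x) = (∫ t in T..T + s, U t x) - ∫ t in 0..s, U t x := by
    simp_rw [map_sub]
    rw [intervalIntegral.integral_sub ((hcont _).intervalIntegrable _ _) (hint _ _), hshift,
      intervalIntegral.integral_interval_sub_interval_comm' (hint _ _) (hint _ _) (hint _ _)]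
  rw [map_sub, ← map_sub, timeAverage_apply, htele, norm_smul, Real.norm_eq_abs, abs_inv]
  gcongr
  calc _ ≤ ‖∫ t in T..T + s, U t x‖ + ‖∫ t in 0..s, U t x‖ := norm_sub_le _ _
    _ ≤ |T + s - T| * ‖x‖ + |s - 0| * ‖x‖ := by
        gcongr <;> exact norm_integral_le_of_contraction hU _ _ x
    _ = 2 * |s| * ‖x‖ := by rw [add_sub_cancel_left, sub_zero]; ring

theorem tendsto_timeAverage_sub_zero (hgrp : ∀ s t, U (s + t) = (U s).comp (U t))
    (hU : ∀ t x, ‖U t x‖ ≤ ‖x‖) {l : Filter ℝ} (hl : Tendsto (|·|) l atTop) (s : ℝ) (x : E) :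
    Tendsto (timeAverage U hcont · (U s x - x)) l (𝓝 0) := by
  refine squeeze_zero_norm (fun T => norm_timeAverage_sub_le hgrp hU T s x) ?_
  simpa using (tendsto_inv_atTop_zero.comp hl).mul_const (2 * |s| * ‖x‖)

end TimeAverage

theorem tendsto_timeAverage_starProjection {E : Type*} [NormedAddCommGroup E]
    [InnerProductSpace ℂ E] [CompleteSpace E] {U : ℝ → E →L[ℂ] E}
    (hcont : ∀ v, Continuous fun t => U t v) (hgrp : ∀ s t, U (s + t) = (U s).comp (U t))
    (hU : ∀ t x, ‖U t x‖ ≤ ‖x‖) {l : Filter ℝ} (hl : Tendsto (|·|) l atTop) (v : E) :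
    Tendsto (timeAverage U hcont · v) l (𝓝 ((invariantSubmodule U).starProjection v)) := by
  set Pv := (invariantSubmodule U).starProjection v
  have hrest : Tendsto (timeAverage U hcont · (v - Pv)) l (𝓝 0) :=
    orthogonal_invariantSubmodule_le hU
      (isClosed_tendstoZeroSubmodule (lipschitzWith_timeAverage hU) l)
      (tendsto_timeAverage_sub_zero hgrp hU hl) (Submodule.sub_starProjection_mem_orthogonal v)
  have hne : ∀ᶠ T in l, T ≠ 0 := (hl.eventually_ne_atTop 0).mono fun _ => abs_ne_zero.mp
  have hsum : Tendsto (fun T => Pv + timeAverage U hcont T (v - Pv)) l (𝓝 Pv) := by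
    simpa using tendsto_const_nhds.add hrest
  refine hsum.congr' ?_
  filter_upwards [hne] with T hT
  rw [map_sub, timeAverage_of_mem_invariantSubmodule (Submodule.starProjection_apply_mem _ v) hT,
    add_sub_cancel]

theorem stmt_15_general
    {E : Type*} [NormedAddCommGroup E] [InnerProductSpace ℂ E] [CompleteSpace E]
    (U : ℝ → E →L[ℂ] E)
    (hgrp : ∀ s t : ℝ, U (s + t) = (U s).comp (U t))
    (hunitary : ∀ (t : ℝ) (x : E), ‖U t x‖ = ‖x‖)
    (hcont : ∀ v : E, Continuous fun t : ℝ => U t v) :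
    ∀ v : E, ∃ Pv : E,
      (∀ t : ℝ, U t Pv = Pv) ∧
      (∀ w : E, (∀ t : ℝ, U t w = w) → (⟪v - Pv, w⟫ : ℂ) = 0) ∧
      Filter.Tendsto (fun T : ℝ => (1 / T) • ∫ t in (0 : ℝ)..T, U t v)
        Filter.atTop (nhds Pv) ∧
      Filter.Tendsto (fun T : ℝ => (1 / T) • ∫ t in (0 : ℝ)..T, U t v)
        Filter.atBot (nhds Pv) := by
  intro v
  have hU (t : ℝ) (x : E) : ‖U t x‖ ≤ ‖x‖ := (hunitary t x).le
  have hlim {l : Filter ℝ} (hl : Tendsto (|·|) l atTop) :=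
    tendsto_timeAverage_starProjection hcont hgrp hU hl v
  simp only [timeAverage_apply] at hlim
  refine ⟨(invariantSubmodule U).starProjection v,
    mem_invariantSubmodule.1 (Submodule.starProjection_apply_mem _ v),
    fun w hw => Submodule.inner_left_of_mem_orthogonal (mem_invariantSubmodule.2 hw)
      (Submodule.sub_starProjection_mem_orthogonal v), ?_, ?_⟩
  · simpa only [one_div] using hlim tendsto_abs_atTop_atTop
  · simpa only [one_div] using hlim tendsto_abs_atBot_atTop

/-- Von Neumann mean ergodic theorem with identification of the limit: for a strongly
continuous one-parameter unitary group `(U_t)` on a Hilbert space, the time averages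
`(1/T)∫₀^T U_t v dt` converge in norm, as `T → +∞` and as `T → -∞`, to the orthogonal
projection of `v` onto the invariant vectors (characterized by being invariant with
`v - Pv` orthogonal to every invariant vector). -/
theorem stmt_15
    {E : Type*} [NormedAddCommGroup E] [InnerProductSpace ℂ E] [CompleteSpace E]
    (U : ℝ → E →L[ℂ] E)
    (hgrp : ∀ s t : ℝ, U (s + t) = (U s).comp (U t)) (h0 : U 0 = 1)
    (hunitary : ∀ (t : ℝ) (x : E), ‖U t x‖ = ‖x‖)
    (hcont : ∀ v : E, Continuous fun t : ℝ => U t v) :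
    ∀ v : E, ∃ Pv : E,
      (∀ t : ℝ, U t Pv = Pv) ∧
      (∀ w : E, (∀ t : ℝ, U t w = w) → (⟪v - Pv, w⟫ : ℂ) = 0) ∧
      Filter.Tendsto (fun T : ℝ => (1 / T) • ∫ t in (0 : ℝ)..T, U t v)
        Filter.atTop (nhds Pv) ∧
      Filter.Tendsto (fun T : ℝ => (1 / T) • ∫ t in (0 : ℝ)..T, U t v)
        Filter.atBot (nhds Pv) :=
  stmt_15_general U hgrp hunitary hcont
end
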